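/- arXiv:0912.1672 — 2 statements merged into one kernel-verified Lean document; each statement's English description precedes it below -/
import Mathlib

section
/- With the setup of finite minds M, finite brains B, and joint pmf p, define the Bayes error L* = min over all classifiers g : B → M of L(g). Then M statistically supervenes on B if and only if L* = 0. -/
def misclass {M B : Type*} [Fintype M] [Fintype B] [DecidableEq M]
    (p : M × B → ℝ) (g : B → M) : ℝ :=
  ∑ x : M × B, if g x.2 ≠ x.1 then p x else 0

/-! Zero loss of a classifier `g` means exactly that `p (m, b) > 0` forces `g b = m`, and such a
`g` exists iff every brain state has at most one mind state of positive probability. Since there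
are finitely many classifiers, `L*` is attained, so `L* = 0` iff some classifier has zero loss. -/

theorem exists_fun_of_rel_imp_eq_iff {α β : Type*} [Nonempty α] (R : α → β → Prop) :
    (∃ g : β → α, ∀ a b, R a b → g b = a) ↔ ∀ a a' b, R a b → R a' b → a = a' := by
  classical
  constructor
  · rintro ⟨g, hg⟩ a a' b ha ha'
    rw [← hg a b ha, hg a' b ha']
  · intro huniq
    refine ⟨fun b => if h : ∃ a, R a b then h.choose else Classical.arbitrary α, ?_⟩
    intro a b hab
    have hex : ∃ a, R a b := ⟨a, hab⟩
    simp only [dif_pos hex]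
    exact huniq _ _ b hex.choose_spec hab

section

variable {M B : Type*} [Fintype M] [Fintype B] [DecidableEq M] {p : M × B → ℝ}

theorem misclass_nonneg (hp : ∀ x, 0 ≤ p x) (g : B → M) : 0 ≤ misclass p g :=
  Finset.sum_nonneg fun x _ => by split_ifs <;> simp [hp x]

theorem misclass_eq_zero_iff (hp : ∀ x, 0 ≤ p x) (g : B → M) :
    misclass p g = 0 ↔ ∀ m b, 0 < p (m, b) → g b = m := by
  unfold misclass
  rw [Finset.sum_eq_zero_iff_of_nonneg fun x _ => by split_ifs <;> simp [hp x]]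
  simp only [Finset.mem_univ, true_implies, ite_eq_right_iff, Prod.forall]
  refine forall₂_congr fun m b => ⟨fun h hpos => ?_, fun h hne => ?_⟩
  · by_contra hne
    exact hpos.ne' (h hne)
  · by_contra hpx
    exact hne (h ((hp _).lt_of_ne' hpx))

theorem iInf_misclass_eq_zero_iff [Nonempty M] (hp : ∀ x, 0 ≤ p x) :
    (⨅ g : B → M, misclass p g) = 0 ↔ ∃ g, misclass p g = 0 := by
  constructor
  · intro h
    obtain ⟨g, hg⟩ := exists_eq_ciInf_of_finite (f := fun g : B → M => misclass p g)
    exact ⟨g, hg.trans h⟩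
  · rintro ⟨g, hg⟩
    exact le_antisymm (hg ▸ ciInf_le (Set.finite_range _).bddBelow g)
      (le_ciInf (misclass_nonneg hp))

end

theorem stmt_1_general {M B : Type*} [Fintype M] [Fintype B] [Nonempty M]
    [DecidableEq M] (p : M × B → ℝ)
    (hp : ∀ x, 0 ≤ p x) :
    (∀ m m' : M, ∀ b : B, 0 < p (m, b) → 0 < p (m', b) → m = m') ↔
      (⨅ g : B → M, misclass p g) = 0 := by
  simp only [iInf_misclass_eq_zero_iff hp, misclass_eq_zero_iff hp]
  exact (exists_fun_of_rel_imp_eq_iff fun m b => 0 < p (m, b)).symm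

/-- M statistically supervenes on B iff the Bayes error `L* = ⨅ g, L(g)` is zero. -/
theorem stmt_1 {M B : Type*} [Fintype M] [Fintype B] [Nonempty M] [Nonempty B]
    [DecidableEq M] (p : M × B → ℝ)
    (hp : ∀ x, 0 ≤ p x) (hsum : ∑ x : M × B, p x = 1) :
    (∀ m m' : M, ∀ b : B, 0 < p (m, b) → 0 < p (m', b) → m = m') ↔
      (⨅ g : B → M, misclass p g) = 0 :=
  stmt_1_general p hp
end

section
/- Arbitrarily slow convergence at the level of Bernoulli parameters: for any sequence of sample sizes and any fixed n', and for any target power β < 1 and level α ∈ (0,1), there exists a parameter q < ε (depending on n') such that the probability that Binomial(n', q) ≤ k_α is less than β, where k_α is the largest k with ∑_{j≤k} C(n',j) ε^j (1−ε)^{n'−j} ≤ α. Hence no fixed n' guarantees power ≥ β over all alternatives q < ε. -/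
/-!
The power `q ↦ ∑_{j ≤ kα} C(n', j) q^j (1 - q)^(n' - j)` of the test is a polynomial in `q`,
hence continuous; at `q = ε` it equals the size, which is at most `α < β`. So it stays below `β`
for all `q` in a left neighbourhood of `ε`.
-/

open Finset Filter Topology

theorem Filter.Eventually.exists_mem_Ioo_of_nhds {α : Type*} [TopologicalSpace α] [LinearOrder α]
    [OrderTopology α] [DenselyOrdered α] {p : α → Prop} {a b : α} (hab : a < b)
    (hp : ∀ᶠ x in 𝓝 b, p x) : ∃ x ∈ Set.Ioo a b, p x := by
  have : (𝓝[<] b).NeBot := nhdsLT_neBot_of_exists_lt ⟨a, hab⟩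
  exact ((hp.filter_mono nhdsWithin_le_nhds).and (Ioo_mem_nhdsLT hab)).exists.imp
    fun _ h => ⟨h.2, h.1⟩

theorem continuous_binomial_cdf (n k : ℕ) :
    Continuous fun q : ℝ =>
      ∑ j ∈ range (k + 1), (n.choose j : ℝ) * q ^ j * (1 - q) ^ (n - j) := by
  fun_prop

theorem stmt_17_general (ε α β : ℝ) (hε0 : 0 < ε)
    (hαβ : α < β)
    (n' : ℕ) (kα : ℕ)
    (hsize : ∑ j ∈ Finset.range (kα + 1),
        (n'.choose j : ℝ) * ε ^ j * (1 - ε) ^ (n' - j) ≤ α) :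
    ∃ q : ℝ, 0 ≤ q ∧ q < ε ∧
      ∑ j ∈ Finset.range (kα + 1),
        (n'.choose j : ℝ) * q ^ j * (1 - q) ^ (n' - j) < β := by
  have hpower : ∀ᶠ q in 𝓝 ε,
      ∑ j ∈ range (kα + 1), (n'.choose j : ℝ) * q ^ j * (1 - q) ^ (n' - j) < β :=
    (continuous_binomial_cdf n' kα).continuousAt.eventually_lt continuousAt_const
      (hsize.trans_lt hαβ)
  obtain ⟨q, ⟨hq0, hqε⟩, hq⟩ := hpower.exists_mem_Ioo_of_nhds hε0
  exact ⟨q, hq0.le, hqε, hq⟩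

/-- Arbitrarily slow convergence: for any fixed hold-out size `n'` and rejection
threshold `kα` with size at most `α`, and any target power `β < 1`, there is an
alternative `q < ε` whose power is below `β`. -/
theorem stmt_17 (ε α β : ℝ) (hε0 : 0 < ε) (hε1 : ε < 1)
    (hα : 0 < α) (hαβ : α < β) (hβ : β < 1)
    (n' : ℕ) (hn' : 0 < n') (kα : ℕ) (hkα : kα ≤ n')
    (hsize : ∑ j ∈ Finset.range (kα + 1),
        (n'.choose j : ℝ) * ε ^ j * (1 - ε) ^ (n' - j) ≤ α) :
    ∃ q : ℝ, 0 ≤ q ∧ q < ε ∧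
      ∑ j ∈ Finset.range (kα + 1),
        (n'.choose j : ℝ) * q ^ j * (1 - q) ^ (n' - j) < β :=
  stmt_17_general ε α β hε0 hαβ n' kα hsize
end
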